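/- Let P be a Perm algebra, Z a Zinbiel algebra, and A a commutative associative (possibly nonunital) algebra, all over a field k of characteristic zero. Equip the tensor product Z ⊗ P ⊗ A with the bilinear product (z ⊗ p ⊗ a)(w ⊗ q ⊗ b) = zw ⊗ pq ⊗ ab + wz ⊗ qp ⊗ ab. Then this product is commutative and associative. -/

import Mathlib

open scoped TensorProduct

/-! Both identities are bilinear (trilinear), so it suffices to check them on pure tensors,
which span. On pure tensors commutativity is the symmetry of the defining formula. For
associativity, the Perm identity reduces each triple product in `P` to one of `(pq)r`, `p(rq)`,
`(rq)p`; grouping the eight terms on each side accordingly, the `Z`-coefficients agree by the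
Zinbiel identity `x(yz) = (xy + yx)z` and its consequence `x(yz) = y(xz)`. -/

namespace LinearMap

variable {R M : Type*} [CommSemiring R] [AddCommMonoid M] [Module R M] {s : Set M}

theorem comm_of_comm_on_span (hs : Submodule.span R s = ⊤) (m : M →ₗ[R] M →ₗ[R] M)
    (h : ∀ x ∈ s, ∀ y ∈ s, m x y = m y x) (x y : M) : m x y = m y x := by
  have hflip : m = m.flip :=
    ext_on hs fun x hx ↦ ext_on hs fun y hy ↦ h x hx y hy
  exact congr($hflip x y)

theorem assoc_of_assoc_on_span (hs : Submodule.span R s = ⊤) (m : M →ₗ[R] M →ₗ[R] M)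
    (h : ∀ x ∈ s, ∀ y ∈ s, ∀ z ∈ s, m (m x y) z = m x (m y z)) (x y z : M) :
    m (m x y) z = m x (m y z) := by
  have hassoc : m.compr₂ m = ((llcomp R M M M).comp m).compl₂ m :=
    ext_on hs fun x hx ↦ ext_on hs fun y hy ↦ ext_on hs fun z hz ↦ h x hx y hy z hz
  exact congr($hassoc x y z)

end LinearMap

namespace TensorProduct

theorem span_tmul_tmul_eq_top (R M N O : Type*) [CommSemiring R] [AddCommMonoid M]
    [AddCommMonoid N] [AddCommMonoid O] [Module R M] [Module R N] [Module R O] :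
    Submodule.span R {t : M ⊗[R] (N ⊗[R] O) | ∃ m n o, m ⊗ₜ (n ⊗ₜ o) = t} = ⊤ := by
  rw [eq_top_iff]
  rintro t -
  induction t using TensorProduct.induction_on with
  | zero => exact zero_mem _
  | add t₁ t₂ h₁ h₂ => exact add_mem h₁ h₂
  | tmul m u =>
    induction u using TensorProduct.induction_on with
    | zero => simp
    | add u₁ u₂ h₁ h₂ => rw [tmul_add]; exact add_mem h₁ h₂
    | tmul n o => exact Submodule.subset_span ⟨m, n, o, rfl⟩

end TensorProduct

theorem mul_mul_eq_mul_mul_of_perm {P : Type*} [NonUnitalRing P]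
    (hP : ∀ x y z : P, (x * y - y * x) * z = 0) (x y z : P) : x * y * z = y * x * z :=
  sub_eq_zero.mp (sub_mul (x * y) (y * x) z ▸ hP x y z)

theorem mul_left_comm_of_perm {P : Type*} [NonUnitalRing P]
    (hP : ∀ x y z : P, (x * y - y * x) * z = 0) (x y z : P) : x * (y * z) = y * (x * z) := by
  rw [← mul_assoc, mul_mul_eq_mul_mul_of_perm hP, mul_assoc]

theorem mul_left_comm_of_zinbiel {Z : Type*} [NonUnitalNonAssocRing Z]
    (hZ : ∀ x y z : Z, (x * y + y * x) * z = x * (y * z)) (x y z : Z) :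
    x * (y * z) = y * (x * z) := by
  rw [← hZ, ← hZ, add_comm]

section PermZinbielTensor

variable {k : Type*} [CommSemiring k]
  {P : Type*} [NonUnitalRing P] [Module k P]
  {Z : Type*} [NonUnitalNonAssocRing Z] [Module k Z]
  {A : Type*} [NonUnitalCommRing A] [Module k A]

def IsZinbielPermProduct
    (m : Z ⊗[k] (P ⊗[k] A) →ₗ[k] Z ⊗[k] (P ⊗[k] A) →ₗ[k] Z ⊗[k] (P ⊗[k] A)) : Prop :=
  ∀ (z w : Z) (p q : P) (a b : A),
    m (z ⊗ₜ[k] (p ⊗ₜ[k] a)) (w ⊗ₜ[k] (q ⊗ₜ[k] b))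
      = (z * w) ⊗ₜ[k] ((p * q) ⊗ₜ[k] (a * b)) + (w * z) ⊗ₜ[k] ((q * p) ⊗ₜ[k] (a * b))

variable {m : Z ⊗[k] (P ⊗[k] A) →ₗ[k] Z ⊗[k] (P ⊗[k] A) →ₗ[k] Z ⊗[k] (P ⊗[k] A)}

theorem IsZinbielPermProduct.tmul_comm (hm : IsZinbielPermProduct m)
    (z w : Z) (p q : P) (a b : A) :
    m (z ⊗ₜ[k] (p ⊗ₜ[k] a)) (w ⊗ₜ[k] (q ⊗ₜ[k] b))
      = m (w ⊗ₜ[k] (q ⊗ₜ[k] b)) (z ⊗ₜ[k] (p ⊗ₜ[k] a)) := by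
  rw [hm, hm, mul_comm b a, add_comm]

theorem IsZinbielPermProduct.tmul_assoc (hm : IsZinbielPermProduct m)
    (hP : ∀ x y z : P, (x * y - y * x) * z = 0)
    (hZ : ∀ x y z : Z, (x * y + y * x) * z = x * (y * z))
    (z₁ z₂ z₃ : Z) (p q r : P) (a b c : A) :
    m (m (z₁ ⊗ₜ[k] (p ⊗ₜ[k] a)) (z₂ ⊗ₜ[k] (q ⊗ₜ[k] b))) (z₃ ⊗ₜ[k] (r ⊗ₜ[k] c))
      = m (z₁ ⊗ₜ[k] (p ⊗ₜ[k] a)) (m (z₂ ⊗ₜ[k] (q ⊗ₜ[k] b)) (z₃ ⊗ₜ[k] (r ⊗ₜ[k] c))) := by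
  rw [hm, hm, map_add, LinearMap.add_apply, map_add, hm, hm, hm, hm, mul_assoc a b c]
  -- In `P` every product of three factors equals `p * q * r`, `p * (r * q)` or `r * q * p`.
  rw [mul_mul_eq_mul_mul_of_perm hP q p r, ← mul_assoc p q r,
    mul_left_comm_of_perm hP r p q, mul_mul_eq_mul_mul_of_perm hP q r p, ← mul_assoc r q p]
  rw [← hZ z₁ z₂ z₃, mul_left_comm_of_zinbiel hZ z₃ z₁ z₂, ← hZ z₃ z₂ z₁]
  simp only [add_mul, TensorProduct.add_tmul]
  abel

end PermZinbielTensor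

theorem stmt12_general {k : Type*} [Field k]
    {P : Type*} [NonUnitalRing P] [Module k P]
    (hP : ∀ x y z : P, (x * y - y * x) * z = 0)
    {Z : Type*} [NonUnitalNonAssocRing Z] [Module k Z]
    (hZ : ∀ x y z : Z, (x * y + y * x) * z = x * (y * z))
    {A : Type*} [NonUnitalCommRing A] [Module k A]
    (m : Z ⊗[k] (P ⊗[k] A) →ₗ[k] Z ⊗[k] (P ⊗[k] A) →ₗ[k] Z ⊗[k] (P ⊗[k] A))
    (hm : ∀ (z w : Z) (p q : P) (a b : A),
      m (z ⊗ₜ[k] (p ⊗ₜ[k] a)) (w ⊗ₜ[k] (q ⊗ₜ[k] b))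
        = (z * w) ⊗ₜ[k] ((p * q) ⊗ₜ[k] (a * b)) + (w * z) ⊗ₜ[k] ((q * p) ⊗ₜ[k] (a * b))) :
    (∀ x y : Z ⊗[k] (P ⊗[k] A), m x y = m y x) ∧
    (∀ x y z : Z ⊗[k] (P ⊗[k] A), m (m x y) z = m x (m y z)) := by
  have hs := TensorProduct.span_tmul_tmul_eq_top k Z P A
  refine ⟨m.comm_of_comm_on_span hs ?_, m.assoc_of_assoc_on_span hs ?_⟩
  · rintro _ ⟨z, p, a, rfl⟩ _ ⟨w, q, b, rfl⟩
    exact IsZinbielPermProduct.tmul_comm hm z w p q a b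
  · rintro _ ⟨z₁, p, a, rfl⟩ _ ⟨z₂, q, b, rfl⟩ _ ⟨z₃, r, c, rfl⟩
    exact IsZinbielPermProduct.tmul_assoc hm hP hZ z₁ z₂ z₃ p q r a b c

/-- For a Perm algebra `P`, a Zinbiel algebra `Z` and a commutative
associative algebra `A` over a field `k` of characteristic zero, the product
`(z⊗p⊗a)(w⊗q⊗b) = zw ⊗ pq ⊗ ab + wz ⊗ qp ⊗ ab` on `Z ⊗ P ⊗ A` is commutative and
associative. -/
theorem stmt12 {k : Type*} [Field k] [CharZero k]
    {P : Type*} [NonUnitalRing P] [Module k P] [SMulCommClass k P P] [IsScalarTower k P P]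
    (hP : ∀ x y z : P, (x * y - y * x) * z = 0)
    {Z : Type*} [NonUnitalNonAssocRing Z] [Module k Z] [SMulCommClass k Z Z] [IsScalarTower k Z Z]
    (hZ : ∀ x y z : Z, (x * y + y * x) * z = x * (y * z))
    {A : Type*} [NonUnitalCommRing A] [Module k A] [SMulCommClass k A A] [IsScalarTower k A A]
    (m : Z ⊗[k] (P ⊗[k] A) →ₗ[k] Z ⊗[k] (P ⊗[k] A) →ₗ[k] Z ⊗[k] (P ⊗[k] A))
    (hm : ∀ (z w : Z) (p q : P) (a b : A),
      m (z ⊗ₜ[k] (p ⊗ₜ[k] a)) (w ⊗ₜ[k] (q ⊗ₜ[k] b))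
        = (z * w) ⊗ₜ[k] ((p * q) ⊗ₜ[k] (a * b)) + (w * z) ⊗ₜ[k] ((q * p) ⊗ₜ[k] (a * b))) :
    (∀ x y : Z ⊗[k] (P ⊗[k] A), m x y = m y x) ∧
    (∀ x y z : Z ⊗[k] (P ⊗[k] A), m (m x y) z = m x (m y z)) :=
  stmt12_general hP hZ m hm
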